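/- arXiv:2406.08175 — 2 statements merged into one kernel-verified Lean document; each statement's English description precedes it below -/
import Mathlib

section
/- Let M be an EC-free MDP in reachability form, λ ∈ ℝ^k, and let H(λ) be the polyhedron of y ∈ ℝ^E with y ≥ 0, Aᵀ y ≤ δ_in, Tᵀ y ≥ λ. For a subset S' ⊆ S, there exists y ∈ H(λ) whose state-support {s : ∃a, y(s,a) > 0} is contained in S' if and only if there exists a scheduler σ' of the induced subsystem M_{S'} with Pr_{M_{S'}}^{σ'}(◇G_i) ≥ λ_i for all i ∈ [k]. -/
open Finset

structure MDP (S A : Type) [Fintype S] [Fintype A] where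
  init : S
  trans : S → A → Option (S → ℝ)
  nonneg' : ∀ s a f, trans s a = some f → ∀ t, 0 ≤ f t
  sum_one' : ∀ s a f, trans s a = some f → ∑ t, f t = 1
  exists_enabled : ∀ s, ∃ a, (trans s a).isSome

namespace MDP

variable {S A : Type} [Fintype S] [Fintype A]

/-- action `a` is enabled in state `s`. -/
def enabled (M : MDP S A) (s : S) (a : A) : Prop := (M.trans s a).isSome

/-- transition probability (0 if the action is not enabled). -/
noncomputable def prob (M : MDP S A) (s : S) (a : A) (t : S) : ℝ :=
  ((M.trans s a).getD 0) t

/-- A (history-dependent, randomized) scheduler. -/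
structure Scheduler (M : MDP S A) where
  choice : List (S × A) → S → A → ℝ
  choice_nonneg : ∀ h s a, 0 ≤ choice h s a
  choice_sum_one : ∀ h s, ∑ a, choice h s a = 1
  choice_support : ∀ h s a, choice h s a ≠ 0 → M.enabled s a

variable [DecidableEq S]

/-- probability of reaching `G` within `n` steps, from history `h` and current state `s`. -/
noncomputable def reachAux (M : MDP S A) (σ : Scheduler M) (G : Finset S) :
    ℕ → List (S × A) → S → ℝ
  | 0, _, s => if s ∈ G then 1 else 0
  | n + 1, h, s =>
      if s ∈ G then 1
      else ∑ a : A, σ.choice h s a * ∑ t : S, M.prob s a t * reachAux M σ G n (h ++ [(s, a)]) t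

/-- probability of eventually reaching `G`, starting in `s`. -/
noncomputable def prReachFrom (M : MDP S A) (σ : Scheduler M) (G : Finset S) (s : S) : ℝ :=
  ⨆ n : ℕ, reachAux M σ G n [] s

/-- probability of eventually reaching `G` from the initial state. -/
noncomputable def prReach (M : MDP S A) (σ : Scheduler M) (G : Finset S) : ℝ :=
  prReachFrom M σ G M.init

/-- probability of staying in `G` for the first `n` steps. -/
noncomputable def invAux (M : MDP S A) (σ : Scheduler M) (G : Finset S) :
    ℕ → List (S × A) → S → ℝ
  | 0, _, s => if s ∈ G then 1 else 0
  | n + 1, h, s =>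
      if s ∈ G then
        ∑ a : A, σ.choice h s a * ∑ t : S, M.prob s a t * invAux M σ G n (h ++ [(s, a)]) t
      else 0

/-- probability of always remaining in `G`, from the initial state. -/
noncomputable def prInv (M : MDP S A) (σ : Scheduler M) (G : Finset S) : ℝ :=
  ⨅ n : ℕ, invAux M σ G n [] M.init

/-- expected total reward collected in the first `n` steps. -/
noncomputable def expTotal (M : MDP S A) (σ : Scheduler M) (r : S → A → ℝ) :
    ℕ → List (S × A) → S → ℝ
  | 0, _, _ => 0
  | n + 1, h, s =>
      ∑ a : A, σ.choice h s a *
        (r s a + ∑ t : S, M.prob s a t * expTotal M σ r n (h ++ [(s, a)]) t)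

/-- expected (liminf) mean payoff under scheduler `σ`. -/
noncomputable def expMPinf (M : MDP S A) (σ : Scheduler M) (r : S → A → ℝ) : ℝ :=
  Filter.liminf (fun n : ℕ => expTotal M σ r n [] M.init / n) Filter.atTop

/-- expected (limsup) mean payoff under scheduler `σ`. -/
noncomputable def expMPsup (M : MDP S A) (σ : Scheduler M) (r : S → A → ℝ) : ℝ :=
  Filter.limsup (fun n : ℕ => expTotal M σ r n [] M.init / n) Filter.atTop

/-- `M'` (with fresh sink `⊥ = none`) is a subsystem of `M` with state set `S' ∪ {⊥}`. -/
def IsSubsystem (M : MDP S A) (S' : Finset S) (M' : MDP (Option S) A) : Prop :=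
  M.init ∈ S' ∧ M'.init = some M.init ∧
  (∀ a, M'.enabled none a → ∀ t, M'.prob none a t = if t = none then 1 else 0) ∧
  (∀ s ∈ S', ∀ a, (M'.enabled (some s) a ↔ M.enabled s a)) ∧
  (∀ s ∈ S', ∀ t ∈ S', ∀ a,
    M'.prob (some s) a (some t) = M.prob s a t ∨ M'.prob (some s) a (some t) = 0) ∧
  (∀ s ∈ S', ∀ t, t ∉ S' → ∀ a, M'.prob (some s) a (some t) = 0)

/-- `M'` is the subsystem of `M` induced by `S'`: transitions leaving `S'` are
redirected to the absorbing sink `⊥ = none`. -/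
def IsInducedSubsystem (M : MDP S A) (S' : Finset S) (M' : MDP (Option S) A) : Prop :=
  M.init ∈ S' ∧ M'.init = some M.init ∧
  (∀ a, M'.enabled none a → ∀ t, M'.prob none a t = if t = none then 1 else 0) ∧
  (∀ s ∈ S', ∀ a, (M'.enabled (some s) a ↔ M.enabled s a)) ∧
  (∀ s ∈ S', ∀ t ∈ S', ∀ a, M'.prob (some s) a (some t) = M.prob s a t) ∧
  (∀ s ∈ S', ∀ t, t ∉ S' → ∀ a, M'.prob (some s) a (some t) = 0) ∧
  (∀ s ∈ S', ∀ a, M.enabled s a → M'.prob (some s) a none = ∑ t ∈ S'ᶜ, M.prob s a t)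

/-- `C` is an end component of `M`. -/
def IsEC (M : MDP S A) (C : Finset (S × A)) : Prop :=
  C.Nonempty ∧ (∀ p ∈ C, M.enabled p.1 p.2) ∧
  (∀ p ∈ C, ∀ t, 0 < M.prob p.1 p.2 t → t ∈ C.image Prod.fst) ∧
  (∀ s ∈ C.image Prod.fst, ∀ t ∈ C.image Prod.fst,
    Relation.ReflTransGen (fun u v => ∃ a, (u, a) ∈ C ∧ 0 < M.prob u a v) s t)

end MDP

/-- positive boolean combinations of lower-bounded reachability and invariance
predicates; the flag `strict` distinguishes `>` from `≥`. -/
inductive MOProp (S : Type) where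
  | reach (G : Finset S) (lam : ℝ) (strict : Bool)
  | invar (G : Finset S) (lam : ℝ) (strict : Bool)
  | conj (p q : MOProp S)
  | disj (p q : MOProp S)

namespace MDP

variable {S A : Type} [Fintype S] [Fintype A] [DecidableEq S]

/-- satisfaction of a multi-objective property in `M` under `σ`. -/
def Sat (M : MDP S A) (σ : Scheduler M) : MOProp S → Prop
  | .reach G lam strict => if strict then lam < prReach M σ G else lam ≤ prReach M σ G
  | .invar G lam strict => if strict then lam < prInv M σ G else lam ≤ prInv M σ G
  | .conj p q => Sat M σ p ∧ Sat M σ q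
  | .disj p q => Sat M σ p ∨ Sat M σ q

/-- satisfaction of a multi-objective property (over the original state space) in a
subsystem `M'` with sink `⊥ = none`. -/
def SatSub (M' : MDP (Option S) A) (σ : Scheduler M') : MOProp S → Prop
  | .reach G lam strict =>
      if strict then lam < prReach M' σ (G.image some) else lam ≤ prReach M' σ (G.image some)
  | .invar G lam strict =>
      if strict then lam < prInv M' σ (G.image some) else lam ≤ prInv M' σ (G.image some)
  | .conj p q => SatSub M' σ p ∧ SatSub M' σ q
  | .disj p q => SatSub M' σ p ∨ SatSub M' σ q

end MDP

/-!
Both directions are linear-programming duality for `H(λ)`. Given a certificate `y`, let `σ` be the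
memoryless scheduler of the subsystem that plays `a` in `s` with probability
`y (s, a) / ∑ b, y (s, b)`. The reachability probabilities of `σ`, restricted to `S'`, satisfy the
dual inequalities on the support of `y` (this is the Bellman equation of `σ`), so pairing them with
the flow constraints gives `Pr(◇ G i) ≥ (Tᵀ y) i ≥ λ i`.

Conversely, if no certificate is supported in `S'`, Farkas' lemma yields `X, u ≥ 0` with
`T u ≤ A X` on the enabled pairs of `S'` and `X s₀ < u ⬝ᵥ λ`. Extended by `∑ i, u i * 1_{G i}` on
the absorbing states of `F` and by `∑ i, u i` outside `S' ∪ F`, `X` is a superharmonic majorant of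
`∑ i, u i * Pr^σ(◇ G i)` for every scheduler `σ` of the subsystem, contradicting
`Pr^σ(◇ G i) ≥ λ i`.
-/

section Farkas

variable {ι E : Type*}

abbrev vanishingOutside (T : Finset ι) : Submodule ℝ (ι → ℝ) :=
  Submodule.pi (↑T)ᶜ fun _ => ⊥

lemma mem_vanishingOutside {T : Finset ι} {t : ι → ℝ} :
    t ∈ vanishingOutside T ↔ ∀ i ∉ T, t i = 0 := by
  simp [Submodule.mem_pi]

variable [Fintype ι]

theorem exists_sub_smul_nonneg_apply_eq_zero {t g : ι → ℝ} (ht : 0 ≤ t) {j : ι}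
    (hj : 0 < g j) : ∃ α : ℝ, ∃ i, 0 < g i ∧ 0 ≤ t - α • g ∧ (t - α • g) i = 0 := by
  obtain ⟨i, hi, hmin⟩ :=
    (univ.filter (0 < g ·)).exists_min_image (fun i => t i / g i) ⟨j, by simp [hj]⟩
  simp only [mem_filter, mem_univ, true_and] at hi hmin
  refine ⟨t i / g i, i, hi, fun l => ?_, by simp [hi.ne']⟩
  simp only [Pi.zero_apply, Pi.sub_apply, Pi.smul_apply, smul_eq_mul, sub_nonneg]
  rcases lt_or_ge 0 (g l) with hl | hl
  · exact (le_div_iff₀ hl).1 (hmin l hl)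
  · exact (mul_nonpos_of_nonneg_of_nonpos (div_nonneg (ht i) hi.le) hl).trans (ht l)

variable [AddCommGroup E] [Module ℝ E]

/-- Conic Carathéodory. -/
theorem exists_nonneg_eq_and_ker_domRestrict_eq_bot (L : (ι → ℝ) →ₗ[ℝ] E) {t : ι → ℝ}
    (ht : 0 ≤ t) : ∃ T : Finset ι, ∃ t' ∈ vanishingOutside T, 0 ≤ t' ∧ L t' = L t ∧
      LinearMap.ker (L.domRestrict (vanishingOutside T)) = ⊥ := by
  classical
  suffices ∀ T : Finset ι, ∀ t ∈ vanishingOutside T, 0 ≤ t → ∃ T' : Finset ι,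
      ∃ t' ∈ vanishingOutside T', 0 ≤ t' ∧ L t' = L t ∧
        LinearMap.ker (L.domRestrict (vanishingOutside T')) = ⊥ from
    this univ t (mem_vanishingOutside.2 fun i hi => absurd (mem_univ i) hi) ht
  intro T
  induction T using Finset.strongInduction with
  | H T ih =>
  intro t htT ht
  by_cases hinj : LinearMap.ker (L.domRestrict (vanishingOutside T)) = ⊥
  · exact ⟨T, t, htT, ht, rfl, hinj⟩
  obtain ⟨g, hgT, hLg, j, hj⟩ : ∃ g ∈ vanishingOutside T, L g = 0 ∧ ∃ j, 0 < g j := by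
    obtain ⟨⟨g, hgT⟩, hLg, hg⟩ := not_forall₂.1 (mt (LinearMap.ker_eq_bot').2 hinj)
    obtain ⟨j, hj⟩ := Function.ne_iff.1 (Subtype.coe_ne_coe.2 hg)
    rcases hj.lt_or_gt with h | h
    · exact ⟨-g, neg_mem hgT, by simpa using hLg, j, by simpa using h⟩
    · exact ⟨g, hgT, hLg, j, h⟩
  -- Moving `t` along the kernel direction `g` until a coordinate vanishes shrinks its support.
  obtain ⟨α, i, hi, ht', hti⟩ := exists_sub_smul_nonneg_apply_eq_zero ht hj
  have hiT : i ∈ T := by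
    by_contra h
    exact hi.ne' (mem_vanishingOutside.1 hgT i h)
  have hmem : t - α • g ∈ vanishingOutside (T.erase i) := by
    refine mem_vanishingOutside.2 fun l hl => ?_
    rcases eq_or_ne l i with rfl | hli
    · exact hti
    · have hlT : l ∉ T := fun h => hl (mem_erase.2 ⟨hli, h⟩)
      simp [mem_vanishingOutside.1 htT l hlT, mem_vanishingOutside.1 hgT l hlT]
  obtain ⟨T', t', ht'T', ht'0, hLt', hinj'⟩ := ih (T.erase i) (erase_ssubset hiT) _ hmem ht'
  exact ⟨T', t', ht'T', ht'0, by rw [hLt', map_sub, map_smul, hLg, smul_zero, sub_zero], hinj'⟩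

theorem isClosed_image_nonneg [TopologicalSpace E] [IsTopologicalAddGroup E]
    [ContinuousSMul ℝ E] [T2Space E] (L : (ι → ℝ) →ₗ[ℝ] E) : IsClosed (L '' Set.Ici 0) := by
  have hunion : L '' Set.Ici 0 = ⋃ T : {T : Finset ι //
      LinearMap.ker (L.domRestrict (vanishingOutside T)) = ⊥},
      L.domRestrict (vanishingOutside T.1) '' {v | 0 ≤ (v : ι → ℝ)} := by
    ext x
    constructor
    · rintro ⟨t, ht, rfl⟩
      obtain ⟨T, t', ht'T, ht'0, hLt', hT⟩ := exists_nonneg_eq_and_ker_domRestrict_eq_bot L ht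
      exact Set.mem_iUnion.2 ⟨⟨T, hT⟩, ⟨t', ht'T⟩, ht'0, hLt'⟩
    · intro hx
      obtain ⟨T, ⟨t, htT⟩, ht, rfl⟩ := Set.mem_iUnion.1 hx
      exact ⟨t, ht, rfl⟩
  rw [hunion]
  exact isClosed_iUnion_of_finite fun T => (LinearMap.isClosedEmbedding_of_injective T.2).isClosedMap
    _ (isClosed_le continuous_const continuous_subtype_val)

end Farkas

namespace Matrix

variable {m n : Type*} [Fintype m] [Fintype n]

theorem exists_farkas_certificate (B : Matrix m n ℝ) (c : m → ℝ) (E : Set n)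
    (h : ¬ ∃ y, 0 ≤ y ∧ (∀ j ∉ E, y j = 0) ∧ B *ᵥ y ≤ c) :
    ∃ x, 0 ≤ x ∧ (∀ j ∈ E, 0 ≤ (x ᵥ* B) j) ∧ x ⬝ᵥ c < 0 := by
  classical
  let gen : n ⊕ m → (m → ℝ) := Sum.elim (fun j => if j ∈ E then Bᵀ j else 0) (Pi.single · 1)
  let L := Fintype.linearCombination ℝ gen
  have hL : ∀ w, L w = B *ᵥ (fun j => if j ∈ E then w (.inl j) else 0) + w ∘ Sum.inr := by
    intro w
    ext i
    simp [L, gen, Fintype.linearCombination_apply, Fintype.sum_sum_type, Finset.sum_apply,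
      Matrix.mulVec, dotProduct, Pi.single_apply, ite_apply, mul_ite, mul_comm]
  let C : ProperCone ℝ (m → ℝ) := ⟨(PointedCone.positive ℝ _).map L, isClosed_image_nonneg L⟩
  have hgen : ∀ k, gen k ∈ C := fun k =>
    ⟨Pi.single k 1, by simp [Pi.single_nonneg], by simp [L, Fintype.linearCombination_apply_single]⟩
  have hc : c ∉ C := by
    rintro ⟨w, hw, hwc⟩
    change 0 ≤ w at hw
    change L w = c at hwc
    refine h ⟨fun j => if j ∈ E then w (.inl j) else 0, fun j => ?_, fun j hj => if_neg hj, ?_⟩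
    · dsimp only; split_ifs; exacts [hw _, le_rfl]
    · rw [← hwc, hL]
      exact le_add_of_nonneg_right fun i => hw (.inr i)
  obtain ⟨f, hfC, hfc⟩ := C.hyperplane_separation_point hc
  have hf : ∀ z, f z = (fun i => f (Pi.single i 1)) ⬝ᵥ z := by
    intro z
    refine (LinearMap.pi_apply_eq_sum_univ (f : (m → ℝ) →ₗ[ℝ] ℝ) z).trans
      (sum_congr rfl fun i _ => ?_)
    have : (fun j => if i = j then (1 : ℝ) else 0) = Pi.single i 1 := by
      ext j; simp [Pi.single_apply, eq_comm]
    simp [this, mul_comm]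
  refine ⟨fun i => f (Pi.single i 1), fun i => hfC _ (hgen (.inr i)), fun j hj => ?_, ?_⟩
  · have := hfC _ (hgen (.inl j))
    simp only [gen, Sum.elim_inl, if_pos hj] at this
    rwa [hf] at this
  · rw [← hf]; exact hfc

end Matrix

namespace MDP

open Matrix

variable {S A : Type} [Fintype S] [Fintype A]

section Basic

variable (M : MDP S A)

lemma prob_nonneg (s : S) (a : A) (t : S) : 0 ≤ M.prob s a t := by
  unfold prob
  cases h : M.trans s a with
  | none => simp
  | some f => exact M.nonneg' s a f h t

lemma sum_prob {s : S} {a : A} (h : M.enabled s a) : ∑ t, M.prob s a t = 1 := by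
  obtain ⟨f, hf⟩ := Option.isSome_iff_exists.1 h
  simpa [prob, hf] using M.sum_one' s a f hf

lemma sum_prob_mul_of_prob_eq_one {s : S} {a : A} {t : S} (h : M.enabled s a)
    (h1 : M.prob s a t = 1) (f : S → ℝ) : ∑ u, M.prob s a u * f u = f t := by
  classical
  have hzero : ∀ u ≠ t, M.prob s a u = 0 := by
    have := M.sum_prob h
    rw [← add_sum_erase _ _ (mem_univ t), h1, add_eq_left] at this
    exact fun u hu => (sum_eq_zero_iff_of_nonneg fun u _ => M.prob_nonneg s a u).1 this u
      (mem_erase.2 ⟨hu, mem_univ u⟩)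
  rw [sum_eq_single t (fun u _ hu => by rw [hzero u hu, zero_mul]) (by simp), h1, one_mul]

lemma sum_choice_mul_le (σ : Scheduler M) (h : List (S × A)) (s : S) {g : A → ℝ} {c : ℝ}
    (hg : ∀ a, M.enabled s a → g a ≤ c) : ∑ a, σ.choice h s a * g a ≤ c := by
  calc ∑ a, σ.choice h s a * g a ≤ ∑ a, σ.choice h s a * c := by
        refine sum_le_sum fun a _ => ?_
        rcases eq_or_ne (σ.choice h s a) 0 with h0 | h0
        · simp [h0]
        · exact mul_le_mul_of_nonneg_left (hg a (σ.choice_support h s a h0))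
            (σ.choice_nonneg h s a)
    _ = c := by rw [← sum_mul, σ.choice_sum_one, one_mul]

lemma sum_choice_mul_eq (σ : Scheduler M) (h : List (S × A)) (s : S) {g : A → ℝ} {c : ℝ}
    (hg : ∀ a, M.enabled s a → g a = c) : ∑ a, σ.choice h s a * g a = c := by
  calc ∑ a, σ.choice h s a * g a = ∑ a, σ.choice h s a * c := by
        refine sum_congr rfl fun a _ => ?_
        rcases eq_or_ne (σ.choice h s a) 0 with h0 | h0
        · simp [h0]
        · rw [hg a (σ.choice_support h s a h0)]
    _ = c := by rw [← sum_mul, σ.choice_sum_one, one_mul]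

noncomputable def reachMatrix {ι : Type} (G : ι → Finset S) : Matrix (S × A) ι ℝ :=
  fun p i => ∑ t ∈ G i, M.prob p.1 p.2 t

lemma reachMatrix_mulVec {ι : Type} [Fintype ι] (G : ι → Finset S) (u : ι → ℝ) (s : S) (a : A) :
    (M.reachMatrix G *ᵥ u) (s, a) = ∑ i, u i * ∑ t ∈ G i, M.prob s a t := by
  simp [reachMatrix, mulVec, dotProduct, mul_comm]

end Basic

def Scheduler.IsMemoryless {M : MDP S A} (σ : Scheduler M) : Prop :=
  ∀ h, σ.choice h = σ.choice []

open Classical in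
noncomputable def Scheduler.ofWeights (M : MDP S A) (w : S → A → ℝ) (hw0 : ∀ s a, 0 ≤ w s a)
    (hw : ∀ s a, w s a ≠ 0 → M.enabled s a) : Scheduler M where
  choice _ s a :=
    if ∑ b, w s b = 0 then if a = (M.exists_enabled s).choose then 1 else 0
    else w s a / ∑ b, w s b
  choice_nonneg _ s a := by
    split_ifs
    exacts [zero_le_one, le_rfl, div_nonneg (hw0 s a) (sum_nonneg fun b _ => hw0 s b)]
  choice_sum_one _ s := by
    split_ifs with hs
    · simp
    · rw [← sum_div, div_self hs]
  choice_support _ s a h := by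
    split_ifs at h with hs ha
    · exact ha ▸ (M.exists_enabled s).choose_spec
    · exact absurd rfl h
    · exact hw s a fun h0 => h (by rw [h0, zero_div])

lemma Scheduler.ofWeights_isMemoryless (M : MDP S A) (w : S → A → ℝ) (hw0 hw) :
    (Scheduler.ofWeights M w hw0 hw).IsMemoryless := fun _ => rfl

lemma Scheduler.ofWeights_choice_mul_sum (M : MDP S A) (w : S → A → ℝ) (hw0 hw)
    (h : List (S × A)) (s : S) (a : A) :
    (Scheduler.ofWeights M w hw0 hw).choice h s a * ∑ b, w s b = w s a := by
  by_cases hs : ∑ b, w s b = 0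
  · rw [hs, mul_zero, (sum_eq_zero_iff_of_nonneg fun b _ => hw0 s b).1 hs a (mem_univ a)]
  · simp only [Scheduler.ofWeights, if_neg hs, div_mul_cancel₀ _ hs]

variable [DecidableEq S]

section Reach

variable (M : MDP S A) (σ : Scheduler M) (G : Finset S)

lemma reachAux_of_mem {s : S} (hs : s ∈ G) (n : ℕ) (h : List (S × A)) :
    reachAux M σ G n h s = 1 := by
  cases n <;> simp [reachAux, hs]

lemma reachAux_succ_of_not_mem {s : S} (hs : s ∉ G) (n : ℕ) (h : List (S × A)) :
    reachAux M σ G (n + 1) h s =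
      ∑ a, σ.choice h s a * ∑ t, M.prob s a t * reachAux M σ G n (h ++ [(s, a)]) t := by
  rw [reachAux, if_neg hs]

lemma reachAux_nonneg (n : ℕ) : ∀ h s, 0 ≤ reachAux M σ G n h s := by
  induction n with
  | zero => intro h s; unfold reachAux; split_ifs <;> norm_num
  | succ n ih =>
    intro h s
    unfold reachAux
    split_ifs
    · exact zero_le_one
    · exact sum_nonneg fun a _ => mul_nonneg (σ.choice_nonneg h s a)
        (sum_nonneg fun t _ => mul_nonneg (M.prob_nonneg s a t) (ih _ t))

lemma reachAux_le_one (n : ℕ) : ∀ h s, reachAux M σ G n h s ≤ 1 := by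
  induction n with
  | zero => intro h s; unfold reachAux; split_ifs <;> norm_num
  | succ n ih =>
    intro h s
    unfold reachAux
    split_ifs
    · exact le_rfl
    · refine M.sum_choice_mul_le σ h s fun a ha => ?_
      calc ∑ t, M.prob s a t * reachAux M σ G n (h ++ [(s, a)]) t ≤ ∑ t, M.prob s a t * 1 :=
            sum_le_sum fun t _ => mul_le_mul_of_nonneg_left (ih _ t) (M.prob_nonneg s a t)
        _ = 1 := by rw [← sum_mul, M.sum_prob ha, one_mul]

lemma reachAux_le_succ (n : ℕ) : ∀ h s, reachAux M σ G n h s ≤ reachAux M σ G (n + 1) h s := by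
  induction n with
  | zero =>
    intro h s
    by_cases hs : s ∈ G
    · rw [reachAux_of_mem M σ G hs, reachAux_of_mem M σ G hs]
    · rw [reachAux, if_neg hs]
      exact reachAux_nonneg M σ G 1 h s
  | succ n ih =>
    intro h s
    by_cases hs : s ∈ G
    · rw [reachAux_of_mem M σ G hs, reachAux_of_mem M σ G hs]
    · rw [reachAux_succ_of_not_mem M σ G hs, reachAux_succ_of_not_mem M σ G hs]
      exact sum_le_sum fun a _ => mul_le_mul_of_nonneg_left (sum_le_sum fun t _ =>
        mul_le_mul_of_nonneg_left (ih _ t) (M.prob_nonneg s a t)) (σ.choice_nonneg h s a)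

lemma tendsto_reachAux (s : S) :
    Filter.Tendsto (fun n => reachAux M σ G n [] s) Filter.atTop
      (nhds (prReachFrom M σ G s)) :=
  tendsto_atTop_ciSup (monotone_nat_of_le_succ fun n => reachAux_le_succ M σ G n [] s)
    ⟨1, Set.forall_mem_range.2 fun n => reachAux_le_one M σ G n [] s⟩

lemma prReachFrom_nonneg (s : S) : 0 ≤ prReachFrom M σ G s :=
  ge_of_tendsto' (tendsto_reachAux M σ G s) fun n => reachAux_nonneg M σ G n [] s

lemma prReachFrom_of_mem {s : S} (hs : s ∈ G) : prReachFrom M σ G s = 1 := by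
  simp [prReachFrom, reachAux_of_mem M σ G hs]

lemma reachAux_of_absorbing {s : S} (habs : ∀ a, M.enabled s a → M.prob s a s = 1) (n : ℕ)
    (h : List (S × A)) : reachAux M σ G n h s = if s ∈ G then 1 else 0 := by
  induction n generalizing h with
  | zero => rfl
  | succ n ih =>
    split_ifs with hs
    · exact reachAux_of_mem M σ G hs _ h
    · rw [reachAux_succ_of_not_mem M σ G hs]
      refine M.sum_choice_mul_eq σ h s fun a ha => ?_
      rw [M.sum_prob_mul_of_prob_eq_one ha (habs a ha), ih, if_neg hs]

lemma reachAux_eq_of_isMemoryless (hσ : σ.IsMemoryless) (n : ℕ) :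
    ∀ h s, reachAux M σ G n h s = reachAux M σ G n [] s := by
  induction n with
  | zero => intro h s; rfl
  | succ n ih =>
    intro h s
    simp only [reachAux, hσ h, ih (h ++ _), ih ([] ++ _)]

lemma prReachFrom_eq_of_isMemoryless (hσ : σ.IsMemoryless) {s : S} (hs : s ∉ G) :
    prReachFrom M σ G s =
      ∑ a, σ.choice [] s a * ∑ t, M.prob s a t * prReachFrom M σ G t := by
  refine tendsto_nhds_unique ((tendsto_reachAux M σ G s).comp (Filter.tendsto_add_atTop_nat 1))
    ((tendsto_finsetSum _ fun a _ => (tendsto_finsetSum _ fun t _ =>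
      (tendsto_reachAux M σ G t).const_mul _).const_mul _).congr fun n => ?_)
  simp only [Function.comp, reachAux_succ_of_not_mem M σ G hs,
    reachAux_eq_of_isMemoryless M σ G hσ n (_ ++ _)]

lemma prReachFrom_mul_sum_eq_of_isMemoryless (hσ : σ.IsMemoryless) {s : S} (hs : s ∉ G)
    {w : A → ℝ} (hw : ∀ a, σ.choice [] s a * ∑ b, w b = w a) :
    prReachFrom M σ G s * ∑ b, w b = ∑ a, (∑ t, M.prob s a t * prReachFrom M σ G t) * w a := by
  rw [prReachFrom_eq_of_isMemoryless M σ G hσ hs, sum_mul]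
  exact sum_congr rfl fun a _ => by rw [← hw a]; ring

theorem sum_mul_reachAux_le_of_superharmonic {ι : Type} [Fintype ι] (G : ι → Finset S)
    (u : ι → ℝ) (Φ : S → ℝ) (Q : Set S) (hQG : ∀ s ∈ Q, ∀ i, s ∉ G i)
    (hQ : ∀ s ∈ Q, 0 ≤ Φ s ∧ ∀ a, M.enabled s a → ∑ t, M.prob s a t * Φ t ≤ Φ s)
    (hout : ∀ s ∉ Q, ∀ n h, ∑ i, u i * reachAux M σ (G i) n h s ≤ Φ s) (n : ℕ) :
    ∀ h s, ∑ i, u i * reachAux M σ (G i) n h s ≤ Φ s := by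
  intro h s
  by_cases hs : s ∈ Q
  swap
  · exact hout s hs n h
  induction n generalizing h s with
  | zero => simpa [reachAux, hQG s hs] using (hQ s hs).1
  | succ n ih =>
    have hrw : ∑ i, u i * reachAux M σ (G i) (n + 1) h s = ∑ a, σ.choice h s a *
        ∑ t, M.prob s a t * ∑ i, u i * reachAux M σ (G i) n (h ++ [(s, a)]) t := by
      simp only [reachAux_succ_of_not_mem M σ _ (hQG s hs _), mul_sum]
      rw [sum_comm]
      refine sum_congr rfl fun a _ => ?_
      rw [sum_comm]
      exact sum_congr rfl fun t _ => sum_congr rfl fun i _ => by ring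
    rw [hrw]
    refine M.sum_choice_mul_le σ h s fun a ha => le_trans ?_ ((hQ s hs).2 a ha)
    refine sum_le_sum fun t _ => mul_le_mul_of_nonneg_left ?_ (M.prob_nonneg s a t)
    by_cases ht : t ∈ Q
    · exact ih _ t ht
    · exact hout t ht n _

end Reach

section InducedSubsystem

def redirect (W : Finset S) (f : S → ℝ) : Option S → ℝ :=
  fun τ => τ.elim (∑ t ∈ Wᶜ, f t) fun t => if t ∈ W then f t else 0

noncomputable def inducedSubsystem (M : MDP S A) (W : Finset S) : MDP (Option S) A where
  init := some M.init
  trans τ a := τ.elim (some fun τ' => if τ' = none then 1 else 0)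
    fun s => (M.trans s a).map (redirect W)
  nonneg' := by
    rintro (_ | s) a f hf τ
    · cases hf
      dsimp only
      split_ifs <;> norm_num
    · obtain ⟨g, hg, rfl⟩ := Option.map_eq_some_iff.1 hf
      have := M.nonneg' s a g hg
      rcases τ with _ | t
      · exact sum_nonneg fun t _ => this t
      · simp only [redirect, Option.elim]
        split_ifs
        exacts [this t, le_rfl]
  sum_one' := by
    rintro (_ | s) a f hf
    · cases hf
      simp
    · obtain ⟨g, hg, rfl⟩ := Option.map_eq_some_iff.1 hf
      simp only [Fintype.sum_option, redirect, Option.elim, sum_ite_mem, univ_inter]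
      rw [sum_compl_add_sum, M.sum_one' s a g hg]
  exists_enabled := by
    rintro (_ | s)
    · exact ⟨(M.exists_enabled M.init).choose, rfl⟩
    · obtain ⟨a, ha⟩ := M.exists_enabled s
      exact ⟨a, by simpa using ha⟩

variable (M : MDP S A) (W : Finset S)

lemma inducedSubsystem_prob_some (s : S) (a : A) (τ : Option S) :
    (M.inducedSubsystem W).prob (some s) a τ = redirect W (M.prob s a) τ := by
  cases h : M.trans s a <;> rcases τ with _ | t <;> simp [prob, inducedSubsystem, redirect, h]

theorem isInducedSubsystem_inducedSubsystem (hW : M.init ∈ W) :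
    IsInducedSubsystem M W (M.inducedSubsystem W) := by
  refine ⟨hW, rfl, fun a _ t => rfl, fun s _ a => by simp [enabled, inducedSubsystem],
    fun s _ t ht a => ?_, fun s _ t ht a => ?_,
    fun s _ a _ => by simp [inducedSubsystem_prob_some, redirect]⟩ <;>
  simp [inducedSubsystem_prob_some, redirect, ht]

end InducedSubsystem

namespace IsInducedSubsystem

variable {M : MDP S A} {W : Finset S} {M' : MDP (Option S) A}

lemma init_eq (hM' : IsInducedSubsystem M W M') : M'.init = some M.init := hM'.2.1

lemma prob_none (hM' : IsInducedSubsystem M W M') {a : A} (ha : M'.enabled none a)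
    (τ : Option S) : M'.prob none a τ = if τ = none then 1 else 0 := hM'.2.2.1 a ha τ

lemma enabled_some_iff (hM' : IsInducedSubsystem M W M') {s : S} (hs : s ∈ W) (a : A) :
    M'.enabled (some s) a ↔ M.enabled s a := hM'.2.2.2.1 s hs a

lemma prob_some_some (hM' : IsInducedSubsystem M W M') {s t : S} (hs : s ∈ W) (ht : t ∈ W)
    (a : A) : M'.prob (some s) a (some t) = M.prob s a t := hM'.2.2.2.2.1 s hs t ht a

lemma prob_some_some_of_not_mem (hM' : IsInducedSubsystem M W M') {s t : S} (hs : s ∈ W)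
    (ht : t ∉ W) (a : A) : M'.prob (some s) a (some t) = 0 := hM'.2.2.2.2.2.1 s hs t ht a

lemma sum_prob_mul (hM' : IsInducedSubsystem M W M') {s : S} (hs : s ∈ W) (a : A)
    (f : Option S → ℝ) (hf : f none = 0) :
    ∑ τ, M'.prob (some s) a τ * f τ = ∑ t ∈ W, M.prob s a t * f (some t) := by
  rw [Fintype.sum_option, hf, mul_zero, zero_add]
  refine (sum_subset (subset_univ W) fun t _ ht => ?_).symm.trans
    (sum_congr rfl fun t ht => ?_)
  · rw [hM'.prob_some_some_of_not_mem hs ht a, zero_mul]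
  · rw [hM'.prob_some_some hs ht a]

lemma reachAux_none (hM' : IsInducedSubsystem M W M') (σ : Scheduler M') (G : Finset S)
    (n : ℕ) (h : List (Option S × A)) : reachAux M' σ (G.image some) n h none = 0 := by
  rw [reachAux_of_absorbing M' σ _ (fun a ha => by simpa using hM'.prob_none ha none)]
  simp

lemma prReachFrom_none (hM' : IsInducedSubsystem M W M') (σ : Scheduler M') (G : Finset S) :
    prReachFrom M' σ (G.image some) none = 0 := by
  simp [prReachFrom, hM'.reachAux_none]

lemma reachAux_some_of_absorbing (hM' : IsInducedSubsystem M W M') (σ : Scheduler M')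
    (G : Finset S) {s : S} (hs : s ∈ W) (habs : ∀ a, M.enabled s a → M.prob s a s = 1)
    (n : ℕ) (h : List (Option S × A)) :
    reachAux M' σ (G.image some) n h (some s) = if s ∈ G then 1 else 0 := by
  rw [reachAux_of_absorbing M' σ _ fun a ha => ?_]
  · simp
  · rw [hM'.prob_some_some hs hs a]
    exact habs a ((hM'.enabled_some_iff hs a).1 ha)

lemma exists_memoryless_scheduler (hM' : IsInducedSubsystem M W M') {y : S × A → ℝ}
    (hy0 : 0 ≤ y) (hy : ∀ p, y p ≠ 0 → p.1 ∈ W ∧ M.enabled p.1 p.2) :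
    ∃ σ : Scheduler M', σ.IsMemoryless ∧
      ∀ s a, σ.choice [] (some s) a * ∑ b, y (s, b) = y (s, a) := by
  let w : Option S → A → ℝ := fun τ a => τ.elim 0 fun s => y (s, a)
  have hw0 : ∀ τ a, 0 ≤ w τ a := by
    rintro (_ | s) a
    exacts [le_rfl, hy0 _]
  have hw : ∀ τ a, w τ a ≠ 0 → M'.enabled τ a := by
    rintro (_ | s) a h
    · exact absurd rfl h
    · obtain ⟨hs, ha⟩ := hy (s, a) h
      exact (hM'.enabled_some_iff hs a).2 ha
  exact ⟨.ofWeights M' w hw0 hw, Scheduler.ofWeights_isMemoryless M' w hw0 hw,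
    fun s a => Scheduler.ofWeights_choice_mul_sum M' w hw0 hw [] (some s) a⟩

lemma sum_prob_add_le_sum_prob_mul_prReachFrom {F S' G : Finset S}
    (hM' : IsInducedSubsystem M (S' ∪ F) M') (hG : G ⊆ F) (hS'F : ∀ s ∈ S', s ∉ F)
    (σ : Scheduler M') {s : S} (hs : s ∈ S') (a : A) :
    ∑ t ∈ G, M.prob s a t + ∑ t ∈ S', M.prob s a t * prReachFrom M' σ (G.image some) (some t) ≤
      ∑ τ, M'.prob (some s) a τ * prReachFrom M' σ (G.image some) τ := by
  rw [hM'.sum_prob_mul (mem_union_left F hs) a _ (hM'.prReachFrom_none σ G),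
    sum_union (disjoint_left.2 hS'F), add_comm]
  gcongr
  calc ∑ t ∈ G, M.prob s a t
      = ∑ t ∈ G, M.prob s a t * prReachFrom M' σ (G.image some) (some t) :=
        sum_congr rfl fun t ht => by
          rw [prReachFrom_of_mem M' σ _ (mem_image_of_mem some ht), mul_one]
    _ ≤ ∑ t ∈ F, M.prob s a t * prReachFrom M' σ (G.image some) (some t) :=
        sum_le_sum_of_subset_of_nonneg hG fun t _ _ =>
          mul_nonneg (M.prob_nonneg s a t) (prReachFrom_nonneg M' σ _ _)

end IsInducedSubsystem

section Certificate

variable (M : MDP S A)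

-- `flowMatrix` and `reachMatrix G` are the matrices `A` and `T` defining `H(λ)`.
noncomputable def flowMatrix : Matrix (S × A) S ℝ :=
  fun p t => (if p.1 = t then 1 else 0) - M.prob p.1 p.2 t

lemma flowMatrix_mulVec (x : S → ℝ) (s : S) (a : A) :
    (M.flowMatrix *ᵥ x) (s, a) = x s - ∑ t, M.prob s a t * x t := by
  simp [flowMatrix, mulVec, dotProduct, sub_mul]

theorem flowMatrix_mulVec_dotProduct_le {S' : Finset S} {x : S → ℝ} (hx : 0 ≤ x)
    (hxS' : ∀ s ∉ S', x s = 0) (hinit : M.init ∈ S') (y : S × A → ℝ)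
    (hflow : ∀ s ∈ S', (M.flowMatrixᵀ *ᵥ y) s ≤ if s = M.init then 1 else 0) :
    (M.flowMatrix *ᵥ x) ⬝ᵥ y ≤ x M.init := by
  rw [dotProduct_comm, dotProduct_mulVec, dotProduct_comm, ← mulVec_transpose, dotProduct,
    ← sum_subset (subset_univ S') fun s _ hs => by rw [hxS' s hs, zero_mul]]
  calc ∑ s ∈ S', x s * (M.flowMatrixᵀ *ᵥ y) s
      ≤ ∑ s ∈ S', x s * if s = M.init then 1 else 0 :=
        sum_le_sum fun s hs => mul_le_mul_of_nonneg_left (hflow s hs) (hx s)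
    _ = x M.init := by simp [hinit]

theorem sum_prob_mul_le_prReach {F S' G : Finset S} (hG : G ⊆ F) (hS'F : ∀ s ∈ S', s ∉ F)
    (hinit : M.init ∈ S') {y : S × A → ℝ} (hy0 : 0 ≤ y) (hyS' : ∀ p : S × A, p.1 ∉ S' → y p = 0)
    (hflow : ∀ s ∈ S', (M.flowMatrixᵀ *ᵥ y) s ≤ if s = M.init then 1 else 0)
    {M' : MDP (Option S) A} (hM' : IsInducedSubsystem M (S' ∪ F) M') {σ : Scheduler M'}
    (hσ : σ.IsMemoryless) (hσy : ∀ s a, σ.choice [] (some s) a * ∑ b, y (s, b) = y (s, a)) :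
    ∑ p, (∑ t ∈ G, M.prob p.1 p.2 t) * y p ≤ prReach M' σ (G.image some) := by
  set r : Option S → ℝ := prReachFrom M' σ (G.image some)
  -- `x` satisfies the dual inequalities on the support of `y`, so weak duality applies.
  set x : S → ℝ := fun t => if t ∈ S' then r (some t) else 0
  have hx0 : 0 ≤ x := fun t => by
    dsimp only [x]
    split_ifs
    exacts [prReachFrom_nonneg M' σ _ _, le_rfl]
  have hPx : ∀ s a, ∑ t, M.prob s a t * x t = ∑ t ∈ S', M.prob s a t * r (some t) := fun s a =>
    (sum_subset (subset_univ S') fun t _ ht => by simp [x, ht]).symm.trans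
      (sum_congr rfl fun t ht => by simp [x, ht])
  have hharm : ∀ s ∈ S', ∑ a, (∑ t ∈ G, M.prob s a t) * y (s, a) ≤
      ∑ a, (M.flowMatrix *ᵥ x) (s, a) * y (s, a) := by
    intro s hs
    have hbell := prReachFrom_mul_sum_eq_of_isMemoryless M' σ (G.image some) hσ (s := some s)
      (by simpa using fun h => hS'F s hs (hG h)) (hσy s)
    have hxs : x s = r (some s) := if_pos hs
    calc ∑ a, (∑ t ∈ G, M.prob s a t) * y (s, a)
        ≤ ∑ a, ((∑ τ, M'.prob (some s) a τ * r τ) - ∑ t ∈ S', M.prob s a t * r (some t)) *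
            y (s, a) :=
          sum_le_sum fun a _ => mul_le_mul_of_nonneg_right (le_sub_iff_add_le.2
            (hM'.sum_prob_add_le_sum_prob_mul_prReachFrom hG hS'F σ hs a)) (hy0 _)
      _ = r (some s) * ∑ a, y (s, a) - ∑ a, (∑ t ∈ S', M.prob s a t * r (some t)) * y (s, a) := by
          rw [hbell, ← sum_sub_distrib]
          simp only [sub_mul, r]
      _ = ∑ a, (M.flowMatrix *ᵥ x) (s, a) * y (s, a) := by
          simp only [flowMatrix_mulVec, hPx, hxs, sub_mul, sum_sub_distrib, mul_sum]
  calc ∑ p, (∑ t ∈ G, M.prob p.1 p.2 t) * y p ≤ (M.flowMatrix *ᵥ x) ⬝ᵥ y := by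
        rw [dotProduct, Fintype.sum_prod_type, Fintype.sum_prod_type]
        refine sum_le_sum fun s _ => ?_
        by_cases hs : s ∈ S'
        · exact hharm s hs
        · simp [hyS' (s, _) hs]
    _ ≤ x M.init := M.flowMatrix_mulVec_dotProduct_le hx0 (fun s hs => if_neg hs) hinit y hflow
    _ = prReach M' σ (G.image some) := by simp [x, hinit, prReach, r, hM'.init_eq]

/-- Extends a dual solution `(X, u)` to a superharmonic majorant of `∑ i, u i * Pr(◇ G i)`. -/
noncomputable def dualPotential {ι : Type} [Fintype ι] (W : Finset S) (G : ι → Finset S)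
    (X : S → ℝ) (u : ι → ℝ) : Option S → ℝ
  | none => 0
  | some v => if v ∈ W then X v + ∑ i, u i * (if v ∈ G i then 1 else 0) else ∑ i, u i

lemma IsInducedSubsystem.sum_prob_mul_dualPotential_le {ι : Type} [Fintype ι] {W : Finset S}
    {M' : MDP (Option S) A} (hM' : IsInducedSubsystem M W M') {G : ι → Finset S} {X : S → ℝ}
    {u : ι → ℝ} (hX : 0 ≤ X) (hu : 0 ≤ u) {s : S} (hs : s ∈ W) {a : A}
    (hdual : (M.reachMatrix G *ᵥ u) (s, a) ≤ (M.flowMatrix *ᵥ X) (s, a)) :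
    ∑ τ, M'.prob (some s) a τ * dualPotential W G X u τ ≤ X s := by
  set ψ : S → ℝ := fun v => X v + ∑ i, u i * (if v ∈ G i then 1 else 0)
  have hψ0 : 0 ≤ ψ := fun v => add_nonneg (hX v)
    (sum_nonneg fun i _ => mul_nonneg (hu i) (by split_ifs <;> norm_num))
  have hψsum : ∑ t, M.prob s a t * ψ t = ∑ t, M.prob s a t * X t + (M.reachMatrix G *ᵥ u) (s, a) := by
    simp only [ψ, reachMatrix_mulVec, mul_add, sum_add_distrib, mul_sum, mul_ite, mul_one,
      mul_zero]
    rw [sum_comm]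
    simp [sum_ite_mem, mul_comm]
  rw [flowMatrix_mulVec] at hdual
  rw [hM'.sum_prob_mul hs a _ rfl]
  calc ∑ t ∈ W, M.prob s a t * dualPotential W G X u (some t) = ∑ t ∈ W, M.prob s a t * ψ t :=
        sum_congr rfl fun t ht => by simp [dualPotential, ψ, ht]
    _ ≤ ∑ t, M.prob s a t * ψ t := sum_le_sum_of_subset_of_nonneg (subset_univ _)
        fun t _ _ => mul_nonneg (M.prob_nonneg s a t) (hψ0 t)
    _ ≤ X s := by linarith

theorem sum_mul_prReach_le_of_dual {ι : Type} [Fintype ι] {F S' : Finset S} {G : ι → Finset S}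
    (habs : ∀ s ∈ F, ∀ a, M.enabled s a → M.prob s a s = 1) (hG : ∀ i, G i ⊆ F)
    (hS'F : ∀ s ∈ S', s ∉ F) (hinit : M.init ∈ S') {X : S → ℝ} {u : ι → ℝ} (hX : 0 ≤ X)
    (hu : 0 ≤ u) (hdual : ∀ s ∈ S', ∀ a, M.enabled s a →
      (M.reachMatrix G *ᵥ u) (s, a) ≤ (M.flowMatrix *ᵥ X) (s, a))
    {M' : MDP (Option S) A} (hM' : IsInducedSubsystem M (S' ∪ F) M') (σ : Scheduler M') :
    ∑ i, u i * prReach M' σ ((G i).image some) ≤ X M.init := by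
  set Φ := dualPotential (S' ∪ F) G X u
  have hΦ : ∀ s ∈ S', Φ (some s) = X s := fun s hs => by
    have hsG : ∀ i, s ∉ G i := fun i h => hS'F s hs (hG i h)
    simp [Φ, dualPotential, hs, hsG]
  have hQG : ∀ τ ∈ some '' (S' : Set S), ∀ i, τ ∉ (G i).image some := by
    rintro _ ⟨s, hs, rfl⟩ i
    simpa using fun h => hS'F s hs (hG i h)
  have hQ : ∀ τ ∈ some '' (S' : Set S), 0 ≤ Φ τ ∧
      ∀ a, M'.enabled τ a → ∑ τ', M'.prob τ a τ' * Φ τ' ≤ Φ τ := by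
    rintro _ ⟨s, hs, rfl⟩
    have hsW : s ∈ S' ∪ F := mem_union_left F hs
    refine ⟨(hΦ s hs).symm ▸ hX s, fun a ha => (hΦ s hs).symm ▸ ?_⟩
    exact hM'.sum_prob_mul_dualPotential_le M hX hu hsW
      (hdual s hs a ((hM'.enabled_some_iff hsW a).1 ha))
  have hout : ∀ τ ∉ some '' (S' : Set S), ∀ n h,
      ∑ i, u i * reachAux M' σ ((G i).image some) n h τ ≤ Φ τ := by
    rintro (_ | v) hv n h
    · simp [hM'.reachAux_none, Φ, dualPotential]
    · have hvS' : v ∉ S' := fun h => hv ⟨v, h, rfl⟩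
      by_cases hvF : v ∈ F
      · simp only [hM'.reachAux_some_of_absorbing σ _ (mem_union_right S' hvF) (habs v hvF)]
        simpa [Φ, dualPotential, hvF] using hX v
      · simpa [Φ, dualPotential, hvS', hvF] using sum_le_sum fun i _ =>
          mul_le_of_le_one_right (hu i) (reachAux_le_one M' σ ((G i).image some) n h (some v))
  have hlim : Filter.Tendsto (fun n => ∑ i, u i * reachAux M' σ ((G i).image some) n [] M'.init)
      Filter.atTop (nhds (∑ i, u i * prReach M' σ ((G i).image some))) :=
    tendsto_finsetSum _ fun i _ => (tendsto_reachAux M' σ _ M'.init).const_mul _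
  refine le_of_tendsto' hlim fun n => ?_
  rw [hM'.init_eq, ← hΦ _ hinit]
  exact sum_mul_reachAux_le_of_superharmonic M' σ _ u Φ _ hQG hQ hout n [] _

theorem exists_certificate_of_le_prReach {ι : Type} [Fintype ι] {F S' : Finset S}
    {G : ι → Finset S} (habs : ∀ s ∈ F, ∀ a, M.enabled s a → M.prob s a s = 1)
    (hG : ∀ i, G i ⊆ F) (hS'F : ∀ s ∈ S', s ∉ F) (hinit : M.init ∈ S') {lam : ι → ℝ}
    {M' : MDP (Option S) A} (hM' : IsInducedSubsystem M (S' ∪ F) M') {σ : Scheduler M'}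
    (hσ : ∀ i, lam i ≤ prReach M' σ ((G i).image some)) :
    ∃ y : S × A → ℝ, 0 ≤ y ∧ (∀ p : S × A, p.1 ∈ F ∨ ¬ M.enabled p.1 p.2 → y p = 0) ∧
      (∀ s, s ∉ F → (M.flowMatrixᵀ *ᵥ y) s ≤ if s = M.init then 1 else 0) ∧
      (∀ i, lam i ≤ ((M.reachMatrix G)ᵀ *ᵥ y) i) ∧ (∀ s : S, (∃ a, 0 < y (s, a)) → s ∈ S') := by
  classical
  by_contra hno
  -- Farkas' alternative for `H(λ)`, with `y` restricted to the enabled pairs of `S'`.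
  let B := fromRows M.flowMatrixᵀ (-(M.reachMatrix G)ᵀ)
  let c := Sum.elim (fun s => if s = M.init then 1 else 0) (-lam)
  let E := {p : S × A | p.1 ∈ S' ∧ M.enabled p.1 p.2}
  have hinfeas : ¬ ∃ y, 0 ≤ y ∧ (∀ p ∉ E, y p = 0) ∧ B *ᵥ y ≤ c := by
    rintro ⟨y, hy0, hyE, hy⟩
    rw [fromRows_mulVec, neg_mulVec] at hy
    refine hno ⟨y, hy0, fun p hp => hyE p ?_, fun s _ => hy (.inl s), fun i => ?_,
      fun s ⟨a, ha⟩ => ?_⟩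
    · rintro ⟨h1, h2⟩
      rcases hp with hp | hp
      exacts [hS'F _ h1 hp, hp h2]
    · simpa [c] using hy (.inr i)
    · by_contra hs
      exact ha.ne' (hyE (s, a) fun h => hs h.1)
  obtain ⟨x, hx0, hxB, hxc⟩ := B.exists_farkas_certificate c E hinfeas
  have hdual : ∀ s ∈ S', ∀ a, M.enabled s a →
      (M.reachMatrix G *ᵥ (x ∘ Sum.inr)) (s, a) ≤ (M.flowMatrix *ᵥ (x ∘ Sum.inl)) (s, a) := by
    intro s hs a ha
    have := hxB (s, a) ⟨hs, ha⟩
    rw [vecMul_fromRows, vecMul_neg, vecMul_transpose, vecMul_transpose] at this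
    simpa [sub_nonneg] using this
  have hle := M.sum_mul_prReach_le_of_dual habs hG hS'F hinit (fun s => hx0 _) (fun i => hx0 _)
    hdual hM' σ
  have hlam : ∑ i, x (.inr i) * lam i ≤ ∑ i, x (.inr i) * prReach M' σ ((G i).image some) :=
    sum_le_sum fun i _ => mul_le_mul_of_nonneg_left (hσ i) (hx0 _)
  rw [← Sum.elim_comp_inl_inr x, sumElim_dotProduct_sumElim] at hxc
  simp [dotProduct] at hxc hle
  linarith

end Certificate

end MDP

theorem exists_conj_reach_witnessing_subsystem_general {S A : Type} [Fintype S] [Fintype A]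
    [DecidableEq S] (M : MDP S A) (F : Finset S)
    (habs : ∀ s ∈ F, ∀ a, M.enabled s a → M.prob s a s = 1)
    {k : ℕ} (G : Fin k → Finset S) (hG : ∀ i, G i ⊆ F) (lam : Fin k → ℝ)
    (S' : Finset S) (hS'F : ∀ s ∈ S', s ∉ F) (hinitS' : M.init ∈ S') :
    (∃ y : S × A → ℝ,
        (∀ p, 0 ≤ y p) ∧
        (∀ p : S × A, p.1 ∈ F ∨ ¬ M.enabled p.1 p.2 → y p = 0) ∧
        (∀ s, s ∉ F →
          ∑ p : S × A, ((if p.1 = s then (1 : ℝ) else 0) - M.prob p.1 p.2 s) * y p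
            ≤ (if s = M.init then 1 else 0)) ∧
        (∀ i, lam i ≤ ∑ p : S × A, (∑ t ∈ G i, M.prob p.1 p.2 t) * y p) ∧
        (∀ s : S, (∃ a, 0 < y (s, a)) → s ∈ S')) ↔
      (∀ M' : MDP (Option S) A, MDP.IsInducedSubsystem M (S' ∪ F) M' →
        ∃ σ' : MDP.Scheduler M', ∀ i, lam i ≤ MDP.prReach M' σ' ((G i).image some)) := by
  constructor
  · rintro ⟨y, hy0, hyF, hyflow, hylam, hysupp⟩ M' hM'
    have hyS' : ∀ p : S × A, p.1 ∉ S' → y p = 0 := fun p hp =>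
      ((hy0 p).eq_or_lt.resolve_right fun h => hp (hysupp p.1 ⟨p.2, h⟩)).symm
    obtain ⟨σ, hσ, hσy⟩ := hM'.exists_memoryless_scheduler hy0 fun p hp =>
      ⟨mem_union_left F (not_not.1 (mt (hyS' p) hp)), not_not.1 fun h => hp (hyF p (.inr h))⟩
    exact ⟨σ, fun i => (hylam i).trans <| M.sum_prob_mul_le_prReach (hG i) hS'F hinitS' hy0 hyS'
      (fun s hs => hyflow s (hS'F s hs)) hM' hσ hσy⟩
  · intro h
    have hM' := M.isInducedSubsystem_inducedSubsystem (S' ∪ F) (mem_union_left F hinitS')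
    obtain ⟨σ, hσ⟩ := h _ hM'
    exact M.exists_certificate_of_le_prReach habs hG hS'F hinitS' hM' hσ

/-- Witnessing subsystems from Farkas certificates, existential conjunctive case:
there is a certificate `y ∈ H(λ)` with state support contained in `S'` iff some
scheduler of the subsystem induced by `S'` (together with the targets `F`) satisfies
all lower-bounded reachability predicates. -/
theorem exists_conj_reach_witnessing_subsystem {S A : Type} [Fintype S] [Fintype A]
    [DecidableEq S] (M : MDP S A) (F : Finset S)
    (habs : ∀ s ∈ F, ∀ a, M.enabled s a → M.prob s a s = 1)
    (hform : ∀ s, ∃ σ : MDP.Scheduler M, 0 < MDP.prReachFrom M σ F s)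
    (hinit : M.init ∉ F)
    (hECfree : ∀ C : Finset (S × A), MDP.IsEC M C → ∀ p ∈ C, p.1 ∈ F)
    {k : ℕ} (G : Fin k → Finset S) (hG : ∀ i, G i ⊆ F) (lam : Fin k → ℝ)
    (S' : Finset S) (hS'F : ∀ s ∈ S', s ∉ F) (hinitS' : M.init ∈ S') :
    (∃ y : S × A → ℝ,
        (∀ p, 0 ≤ y p) ∧
        (∀ p : S × A, p.1 ∈ F ∨ ¬ M.enabled p.1 p.2 → y p = 0) ∧
        (∀ s, s ∉ F →
          ∑ p : S × A, ((if p.1 = s then (1 : ℝ) else 0) - M.prob p.1 p.2 s) * y p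
            ≤ (if s = M.init then 1 else 0)) ∧
        (∀ i, lam i ≤ ∑ p : S × A, (∑ t ∈ G i, M.prob p.1 p.2 t) * y p) ∧
        (∀ s : S, (∃ a, 0 < y (s, a)) → s ∈ S')) ↔
      (∀ M' : MDP (Option S) A, MDP.IsInducedSubsystem M (S' ∪ F) M' →
        ∃ σ' : MDP.Scheduler M', ∀ i, lam i ≤ MDP.prReach M' σ' ((G i).image some)) :=
  exists_conj_reach_witnessing_subsystem_general M F habs G hG lam S' hS'F hinitS'
end

section
/- Let M be a finite MDP with enabled pairs E and suppose x ∈ ℝ^E satisfies x ≥ 0 and the recurrent-flow equations Σ_{(s',a')∈E} P(s',a',s)·x(s',a') = Σ_{a∈Act(s)} x(s,a) for every state s. Then x(s,a) = 0 for every state-action pair (s,a) that is not contained in any end component of M. -/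
open Finset

section AuxFlow

variable {S A : Type} [Fintype S] [Fintype A]

lemma MDP.prob_nonneg' (M : MDP S A) (s : S) (a : A) (t : S) : 0 ≤ M.prob s a t := by
  unfold MDP.prob
  cases h : M.trans s a with
  | none => simp
  | some f => simpa using M.nonneg' s a f h t

lemma MDP.prob_sum_one' (M : MDP S A) {s : S} {a : A} (h : M.enabled s a) :
    ∑ t, M.prob s a t = 1 := by
  unfold MDP.enabled at h
  cases hf : M.trans s a with
  | none => rw [hf] at h; simp at h
  | some f => simp only [MDP.prob, hf, Option.getD_some]; exact M.sum_one' s a f hf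

/-- the one-step support relation of a flow `x`. -/
abbrev flowRel (M : MDP S A) (x : S × A → ℝ) : S → S → Prop :=
  fun u v => ∃ a, 0 < x (u, a) ∧ 0 < M.prob u a v

end AuxFlow

/-- A nonnegative recurrent flow (inflow equals outflow at every state) vanishes on
every state-action pair that is not contained in any end component. -/
theorem recurrent_flow_supported_on_end_components {S A : Type} [Fintype S] [Fintype A]
    [DecidableEq S] (M : MDP S A) (x : S × A → ℝ)
    (hnn : ∀ p, 0 ≤ x p)
    (hsupp : ∀ p : S × A, ¬ M.enabled p.1 p.2 → x p = 0)
    (hflow : ∀ s, ∑ p : S × A, M.prob p.1 p.2 s * x p = ∑ a : A, x (s, a)) :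
    ∀ p : S × A, (¬ ∃ C : Finset (S × A), MDP.IsEC M C ∧ p ∈ C) → x p = 0 := by
  classical
  intro p hp
  by_contra hx0
  have hxp : 0 < x p := lt_of_le_of_ne (hnn p) (Ne.symm hx0)
  have hen : ∀ q : S × A, 0 < x q → M.enabled q.1 q.2 := by
    intro q hq
    by_contra hne
    exact absurd (hsupp q hne) (ne_of_gt hq)
  have hout_pos : ∀ u a t, 0 < x (u, a) → 0 < M.prob u a t → 0 < ∑ b, x (t, b) := by
    intro u a t hx hpr
    rw [← hflow t]
    refine Finset.sum_pos' (fun q _ => mul_nonneg (M.prob_nonneg' _ _ _) (hnn q)) ?_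
    exact ⟨(u, a), Finset.mem_univ _, mul_pos hpr hx⟩
  have hexists_act : ∀ t, 0 < ∑ b, x (t, b) → ∃ b, 0 < x (t, b) := by
    intro t ht
    by_contra h
    push_neg at h
    exact absurd (Finset.sum_nonpos (fun b _ => h b)) (not_le.mpr ht)
  -- external inflow into a `flowRel`-closed set of states is zero
  have hext : ∀ D : Finset S, (∀ u ∈ D, ∀ v, flowRel M x u v → v ∈ D) →
      ∀ q : S × A, q.1 ∉ D → ∀ t ∈ D, M.prob q.1 q.2 t * x q = 0 := by
    intro D hD q hq t ht
    have hg_inD : ∀ r : S × A, r.1 ∈ D → x r * ∑ t' ∈ D, M.prob r.1 r.2 t' = x r := by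
      intro r hr
      rcases eq_or_lt_of_le (hnn r) with h0 | h0
      · rw [← h0]; simp
      · have hsub : ∑ t' ∈ D, M.prob r.1 r.2 t' = 1 := by
          rw [← M.prob_sum_one' (hen r h0)]
          apply Finset.sum_subset (Finset.subset_univ D)
          intro v _ hv
          by_contra hne
          have hpos : 0 < M.prob r.1 r.2 v :=
            lt_of_le_of_ne (M.prob_nonneg' _ _ _) (Ne.symm hne)
          exact hv (hD r.1 hr v ⟨r.2, by simpa using h0, hpos⟩)
        rw [hsub, mul_one]
    have key : ∑ r ∈ Finset.univ.filter (fun r : S × A => ¬ r.1 ∈ D),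
        x r * ∑ t' ∈ D, M.prob r.1 r.2 t' = 0 := by
      have h1 : ∑ t' ∈ D, ∑ a, x (t', a)
          = ∑ r : S × A, x r * ∑ t' ∈ D, M.prob r.1 r.2 t' := by
        calc ∑ t' ∈ D, ∑ a, x (t', a)
            = ∑ t' ∈ D, ∑ r : S × A, M.prob r.1 r.2 t' * x r :=
              Finset.sum_congr rfl (fun t' _ => (hflow t').symm)
          _ = ∑ r : S × A, ∑ t' ∈ D, M.prob r.1 r.2 t' * x r := Finset.sum_comm
          _ = ∑ r : S × A, x r * ∑ t' ∈ D, M.prob r.1 r.2 t' := by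
              refine Finset.sum_congr rfl (fun r _ => ?_)
              rw [Finset.mul_sum]
              exact Finset.sum_congr rfl (fun t' _ => mul_comm _ _)
      have hset : Finset.univ.filter (fun r : S × A => r.1 ∈ D) = D ×ˢ Finset.univ := by
        ext r; simp
      have h2 : ∑ r ∈ Finset.univ.filter (fun r : S × A => r.1 ∈ D), x r
          = ∑ t' ∈ D, ∑ a, x (t', a) := by
        rw [hset, Finset.sum_product]
      have h3 : ∑ r : S × A, x r * ∑ t' ∈ D, M.prob r.1 r.2 t'
          = (∑ r ∈ Finset.univ.filter (fun r : S × A => r.1 ∈ D),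
              x r * ∑ t' ∈ D, M.prob r.1 r.2 t')
            + ∑ r ∈ Finset.univ.filter (fun r : S × A => ¬ r.1 ∈ D),
              x r * ∑ t' ∈ D, M.prob r.1 r.2 t' :=
        (Finset.sum_filter_add_sum_filter_not _ _ _).symm
      have h4 : ∑ r ∈ Finset.univ.filter (fun r : S × A => r.1 ∈ D),
            x r * ∑ t' ∈ D, M.prob r.1 r.2 t'
          = ∑ r ∈ Finset.univ.filter (fun r : S × A => r.1 ∈ D), x r :=
        Finset.sum_congr rfl (fun r hr => hg_inD r (by simpa using hr))
      linarith [h1, h2, h3, h4]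
    have hterm : x q * ∑ t' ∈ D, M.prob q.1 q.2 t' = 0 := by
      have hmem : q ∈ Finset.univ.filter (fun r : S × A => ¬ r.1 ∈ D) := by simp [hq]
      exact (Finset.sum_eq_zero_iff_of_nonneg (fun r _ => mul_nonneg (hnn r)
        (Finset.sum_nonneg (fun t' _ => M.prob_nonneg' _ _ _)))).mp key q hmem
    have hle : M.prob q.1 q.2 t * x q ≤ x q * ∑ t' ∈ D, M.prob q.1 q.2 t' := by
      rw [mul_comm]
      exact mul_le_mul_of_nonneg_left
        (Finset.single_le_sum (fun t' _ => M.prob_nonneg' q.1 q.2 t') ht) (hnn q)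
    have hge : 0 ≤ M.prob q.1 q.2 t * x q := mul_nonneg (M.prob_nonneg' _ _ _) (hnn q)
    linarith [hle, hge, hterm]
  -- the set of states reachable from `p.1` in the support graph
  set D : Finset S := Finset.univ.filter
    (fun t => Relation.ReflTransGen (flowRel M x) p.1 t) with hDdef
  have hmemD : ∀ t, t ∈ D ↔ Relation.ReflTransGen (flowRel M x) p.1 t := by
    intro t; simp [hDdef]
  have hDclosed : ∀ u ∈ D, ∀ v, flowRel M x u v → v ∈ D := by
    intro u hu v huv
    exact (hmemD v).mpr (((hmemD u).mp hu).tail huv)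
  have hp1D : p.1 ∈ D := (hmemD p.1).mpr Relation.ReflTransGen.refl
  -- every state in `D` can reach `p.1` back
  have hback : ∀ t ∈ D, Relation.ReflTransGen (flowRel M x) t p.1 := by
    intro t ht
    set D' : Finset S := Finset.univ.filter
      (fun v => Relation.ReflTransGen (flowRel M x) t v) with hD'def
    have hmemD' : ∀ v, v ∈ D' ↔ Relation.ReflTransGen (flowRel M x) t v := by
      intro v; simp [hD'def]
    have hD'closed : ∀ u ∈ D', ∀ v, flowRel M x u v → v ∈ D' := by
      intro u hu v huv
      exact (hmemD' v).mpr (((hmemD' u).mp hu).tail huv)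
    have hstep : ∀ u v, flowRel M x u v → v ∈ D' → u ∈ D' := by
      intro u v huv hv
      by_contra hu
      obtain ⟨a, hxa, hpa⟩ := huv
      have h0 := hext D' hD'closed (u, a) hu v hv
      exact absurd h0 (ne_of_gt (mul_pos hpa hxa))
    have hprop : ∀ u v, Relation.ReflTransGen (flowRel M x) u v → v ∈ D' → u ∈ D' := by
      intro u v h
      induction h with
      | refl => exact fun h => h
      | tail h1 h2 ih => exact fun hv => ih (hstep _ _ h2 hv)
    have hpd : p.1 ∈ D' :=
      hprop p.1 t ((hmemD t).mp ht) ((hmemD' t).mpr Relation.ReflTransGen.refl)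
    exact (hmemD' p.1).mp hpd
  -- the end component
  set C : Finset (S × A) := Finset.univ.filter
    (fun q : S × A => q.1 ∈ D ∧ 0 < x q) with hCdef
  have hmemC : ∀ q : S × A, q ∈ C ↔ q.1 ∈ D ∧ 0 < x q := by
    intro q; simp [hCdef]
  have hpC : p ∈ C := (hmemC p).mpr ⟨hp1D, hxp⟩
  apply hp
  refine ⟨C, ⟨⟨p, hpC⟩, ?_, ?_, ?_⟩, hpC⟩
  · intro q hq; exact hen q ((hmemC q).mp hq).2
  · intro q hq t hpt
    obtain ⟨hq1, hqx⟩ := (hmemC q).mp hq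
    have htD : t ∈ D := hDclosed q.1 hq1 t ⟨q.2, by simpa using hqx, hpt⟩
    obtain ⟨b, hb⟩ := hexists_act t (hout_pos q.1 q.2 t (by simpa using hqx) hpt)
    exact Finset.mem_image.mpr ⟨(t, b), (hmemC _).mpr ⟨htD, hb⟩, rfl⟩
  · intro s hs t htm
    obtain ⟨qs, hqs, hqs1⟩ := Finset.mem_image.mp hs
    obtain ⟨qt, hqt, hqt1⟩ := Finset.mem_image.mp htm
    have hsD : s ∈ D := hqs1 ▸ ((hmemC qs).mp hqs).1
    have htD : t ∈ D := hqt1 ▸ ((hmemC qt).mp hqt).1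
    have hlift : ∀ u v, u ∈ D → Relation.ReflTransGen (flowRel M x) u v →
        Relation.ReflTransGen (fun u v => ∃ a, (u, a) ∈ C ∧ 0 < M.prob u a v) u v := by
      intro u v hu h
      induction h with
      | refl => exact Relation.ReflTransGen.refl
      | @tail c v h1 h2 ih =>
        have hcD : c ∈ D :=
          (hmemD c).mpr (Relation.ReflTransGen.trans ((hmemD u).mp hu) h1)
        obtain ⟨a, hxa, hpa⟩ := h2
        exact ih.tail ⟨a, (hmemC _).mpr ⟨hcD, hxa⟩, hpa⟩
    exact hlift s t hsD ((hback s hsD).trans ((hmemD t).mp htD))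
end
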